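/- arXiv:2306.09530 — 5 statements merged into one kernel-verified Lean document; each statement's English description precedes it below -/
import Mathlib

section
/- Let ν be a Borel probability measure on ℝ^d, φ ∈ L²(ℝ^d,ℝ^d;ν), k ∈ ℕ, h₁,…,h_k ∈ C²_c(ℝ^d), and f ∈ C¹_b(ℝ^k). For t ∈ ℝ set μ_t := ν∘(Id + tφ)^{-1}. Then the map t ↦ f(μ_t(h₁),…,μ_t(h_k)) is differentiable at t = 0 with derivative Σ_{i=1}^k ∂_i f(ν(h₁),…,ν(h_k)) · ∫_{ℝ^d} ∇h_i(x)·φ(x) dν(x). -/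
/-!
The pushforward integrals are `∫ h i (x + t • φ x) dν`, so one differentiates under the integral
sign: the `t`-derivative `Dh i (x + t • φ x) (φ x)` is dominated, uniformly in `t`, by
`sup ‖Dh i‖ · ‖φ x‖`, which is `ν`-integrable because `L²` embeds in `L¹` for a finite measure.
The chain rule for `f` then gives the derivative.
-/

open MeasureTheory Real Set

theorem hasDerivAt_integral_comp_add_smul {E F : Type*} [NormedAddCommGroup E]
    [NormedSpace ℝ E] [MeasurableSpace E] [BorelSpace E] [SecondCountableTopology E]
    [NormedAddCommGroup F] [NormedSpace ℝ F] {μ : Measure E} [IsFiniteMeasure μ] {g : E → F}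
    {φ : E → E} (hg : ContDiff ℝ 1 g) (hg_supp : HasCompactSupport g) (hφ : Integrable φ μ) (t₀ : ℝ) :
    HasDerivAt (fun t : ℝ => ∫ x, g (x + t • φ x) ∂μ)
      (∫ x, fderiv ℝ g (x + t₀ • φ x) (φ x) ∂μ) t₀ := by
  have hg' : Continuous (fderiv ℝ g) := hg.continuous_fderiv one_ne_zero
  obtain ⟨B, hB⟩ := hg_supp.exists_bound_of_continuous hg.continuous
  obtain ⟨C, hC⟩ := (hg_supp.fderiv ℝ).exists_bound_of_continuous hg'
  have hshift (t : ℝ) : AEStronglyMeasurable (fun x => x + t • φ x) μ :=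
    aestronglyMeasurable_id.add (hφ.1.const_smul t)
  refine (hasDerivAt_integral_of_dominated_loc_of_deriv_le (F := fun t x => g (x + t • φ x))
    (F' := fun t x => fderiv ℝ g (x + t • φ x) (φ x)) (bound := fun x => C * ‖φ x‖)
    Filter.univ_mem (.of_forall fun t => hg.continuous.comp_aestronglyMeasurable (hshift t))
    ((integrable_const B).mono' (hg.continuous.comp_aestronglyMeasurable (hshift t₀))
      (.of_forall fun x => hB _))
    ((hg'.fst'.clm_apply continuous_snd).comp_aestronglyMeasurable ((hshift t₀).prodMk hφ.1))
    (.of_forall fun x t _ => ?_) (hφ.norm.const_mul C) (.of_forall fun x t _ => ?_)).2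
  · exact ((fderiv ℝ g _).le_opNorm _).trans (mul_le_mul_of_nonneg_right (hC _) (norm_nonneg _))
  · have hline : HasDerivAt (fun s : ℝ => x + s • φ x) (φ x) t := by
      simpa using ((hasDerivAt_id t).smul_const (φ x)).const_add x
    exact ((hg.differentiable one_ne_zero _).hasFDerivAt).comp_hasDerivAt t hline

theorem ContinuousLinearMap.apply_eq_sum_apply_single_mul {ι : Type*} [Fintype ι] [DecidableEq ι]
    (l : (ι → ℝ) →L[ℝ] ℝ) (c : ι → ℝ) : l c = ∑ i, l (Pi.single i 1) * c i := by
  conv_lhs => rw [pi_eq_sum_univ' c]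
  simp [map_sum, mul_comm]

theorem stmt_6_general (d k : ℕ) (ν : Measure (EuclideanSpace ℝ (Fin d))) [IsProbabilityMeasure ν]
    (φ : EuclideanSpace ℝ (Fin d) → EuclideanSpace ℝ (Fin d))
    (hφ_meas : Measurable φ)
    (hφ_L2 : MemLp φ 2 ν)
    (h : Fin k → EuclideanSpace ℝ (Fin d) → ℝ)
    (hh_smooth : ∀ i, ContDiff ℝ 2 (h i))
    (hh_supp : ∀ i, HasCompactSupport (h i))
    (f : (Fin k → ℝ) → ℝ)
    (hf : ContDiff ℝ 1 f) :
    HasDerivAt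
      (fun t : ℝ => f (fun i => ∫ x, h i x ∂(Measure.map (fun x => x + t • φ x) ν)))
      (∑ i, fderiv ℝ f (fun i => ∫ x, h i x ∂ν) (Pi.single i 1) *
        ∫ x, fderiv ℝ (h i) x (φ x) ∂ν) 0 := by
  have hφ : Integrable φ ν := hφ_L2.integrable one_le_two
  have hpush (t : ℝ) (i : Fin k) :
      ∫ x, h i x ∂(Measure.map (fun x => x + t • φ x) ν) = ∫ x, h i (x + t • φ x) ∂ν :=
    integral_map (measurable_id.add (hφ_meas.const_smul t)).aemeasurable
      (hh_smooth i).continuous.aestronglyMeasurable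
  have hcurve : HasDerivAt (fun t : ℝ => fun i => ∫ x, h i (x + t • φ x) ∂ν)
      (fun i => ∫ x, fderiv ℝ (h i) x (φ x) ∂ν) 0 :=
    hasDerivAt_pi.2 fun i => by
      simpa using
        hasDerivAt_integral_comp_add_smul ((hh_smooth i).of_le one_le_two) (hh_supp i) hφ 0
  have hf₀ : HasFDerivAt f (fderiv ℝ f fun i => ∫ x, h i x ∂ν)
      (fun i => ∫ x, h i (x + (0 : ℝ) • φ x) ∂ν) := by
    simpa using (hf.differentiable one_ne_zero _).hasFDerivAt
  simp only [hpush, ← ContinuousLinearMap.apply_eq_sum_apply_single_mul]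
  exact hf₀.comp_hasDerivAt 0 hcurve

/-- Let `ν` be a Borel probability measure on `ℝ^d`,
`φ ∈ L²(ℝ^d, ℝ^d; ν)`, `k ∈ ℕ`, `h₁, …, h_k ∈ C²_c(ℝ^d)` and `f ∈ C¹_b(ℝ^k)`. For `t ∈ ℝ`
set `μ_t := ν∘(Id + tφ)⁻¹`. Then `t ↦ f(μ_t(h₁), …, μ_t(h_k))` is differentiable at `t = 0`
with derivative `Σ_i ∂_i f(ν(h₁), …, ν(h_k)) · ∫ ∇h_i(x)·φ(x) dν(x)`. -/
theorem stmt_6 (d k : ℕ) (ν : Measure (EuclideanSpace ℝ (Fin d))) [IsProbabilityMeasure ν]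
    (φ : EuclideanSpace ℝ (Fin d) → EuclideanSpace ℝ (Fin d))
    (hφ_meas : Measurable φ)
    (hφ_L2 : MemLp φ 2 ν)
    (h : Fin k → EuclideanSpace ℝ (Fin d) → ℝ)
    (hh_smooth : ∀ i, ContDiff ℝ 2 (h i))
    (hh_supp : ∀ i, HasCompactSupport (h i))
    (f : (Fin k → ℝ) → ℝ)
    (hf : ContDiff ℝ 1 f)
    (hf_bdd : ∃ M : ℝ, ∀ p, |f p| ≤ M ∧ ‖fderiv ℝ f p‖ ≤ M) :
    HasDerivAt
      (fun t : ℝ => f (fun i => ∫ x, h i x ∂(Measure.map (fun x => x + t • φ x) ν)))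
      (∑ i, fderiv ℝ f (fun i => ∫ x, h i x ∂ν) (Pi.single i 1) *
        ∫ x, fderiv ℝ (h i) x (φ x) ∂ν) 0 :=
  stmt_6_general d k ν φ hφ_meas hφ_L2 h hh_smooth hh_supp f hf
end

section
/- Assume β ∈ C¹(ℝ), β(0) = 0 and 0 < γ ≤ β'(r) ≤ γ₁ < ∞ for all r ∈ ℝ, and assume b: ℝ → ℝ is continuous with 0 < b₀ ≤ b(r) ≤ B < ∞ for all r. Let v: ℝ^d → [0,∞) be Lebesgue-measurable with ∫_{ℝ^d} v(x) dx = 1. Then x ↦ η(v(x)) is Lebesgue-integrable on ℝ^d if and only if x ↦ v(x) log v(x) (set to 0 where v(x) = 0) is Lebesgue-integrable on ℝ^d. -/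
open MeasureTheory Real Set intervalIntegral

/-- `g(s) := ∫₁^s β'(w)/(w·b(w)) dw` (oriented interval integral). -/
noncomputable def gFun (β b : ℝ → ℝ) (s : ℝ) : ℝ :=
  ∫ w in (1 : ℝ)..s, deriv β w / (w * b w)

/-- `η(r) := ∫₀^r g(s) ds`. -/
noncomputable def etaFun (β b : ℝ → ℝ) (r : ℝ) : ℝ :=
  ∫ s in (0 : ℝ)..r, gFun β b s

/-!
For `w > 0` the integrand `β'(w)/(w b(w))` lies between `c/w` and `C/w` with `c = γ/B`,
`C = γ₁/b₀`, so `g` is pinched between `c log s` and `C log s`, and `η` between `c` and `C`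
times `r log r - r` on `[0, 1]`, and up to the constant `η(1)` between `c` and `C` times
`r log r - r + 1` on `[1, ∞)`. Hence `|η(r)|` and `|r log r|` bound each other up to a multiple
of `r` (a constant can be absorbed into `r` on `[1, ∞)`), and `v` itself is integrable.
-/

open Topology

theorem abs_le_add_abs_mul_of_mul_le_of_le_mul {a b x y : ℝ} (h₁ : a * x ≤ y) (h₂ : y ≤ b * x) :
    |y| ≤ (|a| + |b|) * |x| := by
  rw [add_mul, ← abs_mul, ← abs_mul]
  exact (abs_le_max_abs_abs h₁ h₂).trans (max_le_add_of_nonneg (abs_nonneg _) (abs_nonneg _))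

theorem continuousOn_integral_one {f : ℝ → ℝ} (hf : ContinuousOn f (Ioi 0)) :
    ContinuousOn (fun s => ∫ w in (1 : ℝ)..s, f w) (Ioi 0) := by
  intro s hs
  have hint : IntervalIntegrable f volume 1 s := (hf.mono fun w hw =>
    lt_of_lt_of_le (lt_min one_pos hs) hw.1).intervalIntegrable
  exact (integral_hasDerivAt_right hint (hf.stronglyMeasurableAtFilter isOpen_Ioi s hs)
    (hf.continuousAt (isOpen_Ioi.mem_nhds hs))).continuousAt.continuousWithinAt

theorem continuousOn_primitive_Ici {g : ℝ → ℝ} {a : ℝ}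
    (hg : ∀ r, a ≤ r → IntervalIntegrable g volume a r) :
    ContinuousOn (fun r => ∫ s in a..r, g s) (Ici a) := by
  intro r hr
  have hIcc : Icc a (r + 1) ∈ 𝓝[Ici a] r := by
    rw [← Ici_inter_Iic]
    exact inter_mem_nhdsWithin _ (Iic_mem_nhds (lt_add_one r))
  refine (continuousWithinAt_primitive (measure_singleton r) ?_).mono_of_mem_nhdsWithin hIcc
  have hr1 : a ≤ r + 1 := by linarith [mem_Ici.1 hr]
  rw [min_self, max_eq_right hr1]
  exact hg (r + 1) hr1

def IsPinchedByInv (f : ℝ → ℝ) (c C : ℝ) : Prop :=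
  ∀ w, 0 < w → c / w ≤ f w ∧ f w ≤ C / w

namespace IsPinchedByInv

variable {f : ℝ → ℝ} {c C : ℝ}

theorem integral_bounds (hf : ContinuousOn f (Ioi 0)) (hpinch : IsPinchedByInv f c C)
    {a b : ℝ} (ha : 0 < a) (hab : a ≤ b) :
    c * log (b / a) ≤ ∫ w in a..b, f w ∧ ∫ w in a..b, f w ≤ C * log (b / a) := by
  have hsub : uIcc a b ⊆ Ioi 0 := fun w hw => by
    rw [uIcc_of_le hab] at hw
    exact ha.trans_le hw.1
  have hint : ∀ k : ℝ, IntervalIntegrable (fun w => k / w) volume a b := fun k =>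
    (continuousOn_const.div continuousOn_id fun w hw => (hsub hw).ne').intervalIntegrable
  have hfint : IntervalIntegrable f volume a b := (hf.mono hsub).intervalIntegrable
  have hval : ∀ k : ℝ, ∫ w in a..b, k / w = k * log (b / a) := fun k => by
    simp only [div_eq_mul_inv k, intervalIntegral.integral_const_mul,
      integral_inv_of_pos ha (ha.trans_le hab)]
  rw [← hval c, ← hval C]
  exact ⟨integral_mono_on hab (hint c) hfint fun w hw => (hpinch w (ha.trans_le hw.1)).1,
    integral_mono_on hab hfint (hint C) fun w hw => (hpinch w (ha.trans_le hw.1)).2⟩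

theorem integral_one_bounds_of_one_le (hf : ContinuousOn f (Ioi 0))
    (hpinch : IsPinchedByInv f c C) {s : ℝ} (hs : 1 ≤ s) :
    c * log s ≤ ∫ w in (1 : ℝ)..s, f w ∧ ∫ w in (1 : ℝ)..s, f w ≤ C * log s := by
  simpa using hpinch.integral_bounds hf one_pos hs

theorem integral_one_bounds_of_le_one (hf : ContinuousOn f (Ioi 0))
    (hpinch : IsPinchedByInv f c C) {s : ℝ} (hs0 : 0 < s) (hs : s ≤ 1) :
    C * log s ≤ ∫ w in (1 : ℝ)..s, f w ∧ ∫ w in (1 : ℝ)..s, f w ≤ c * log s := by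
  obtain ⟨hlo, hhi⟩ := hpinch.integral_bounds hf hs0 hs
  rw [one_div, log_inv] at hlo hhi
  rw [integral_symm]
  constructor <;> linarith

theorem abs_integral_one_le (hf : ContinuousOn f (Ioi 0)) (hpinch : IsPinchedByInv f c C)
    {s : ℝ} (hs : 0 < s) :
    |∫ w in (1 : ℝ)..s, f w| ≤ (|c| + |C|) * |log s| := by
  rcases le_total 1 s with h1 | h1
  · obtain ⟨hlo, hhi⟩ := hpinch.integral_one_bounds_of_one_le hf h1
    exact abs_le_add_abs_mul_of_mul_le_of_le_mul hlo hhi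
  · obtain ⟨hlo, hhi⟩ := hpinch.integral_one_bounds_of_le_one hf hs h1
    exact (abs_le_add_abs_mul_of_mul_le_of_le_mul hlo hhi).trans_eq (by rw [add_comm])

theorem intervalIntegrable_integral_one (hf : ContinuousOn f (Ioi 0))
    (hpinch : IsPinchedByInv f c C) {r : ℝ} (hr : 0 ≤ r) :
    IntervalIntegrable (fun s => ∫ w in (1 : ℝ)..s, f w) volume 0 r := by
  have hpos : ∀ s ∈ uIoc 0 r, 0 < s := fun s hs => by
    rw [uIoc_of_le hr] at hs
    exact hs.1
  refine (intervalIntegrable_log'.abs.const_mul (|c| + |C|)).mono_fun' ?_ ?_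
  · exact ((continuousOn_integral_one hf).mono hpos).aestronglyMeasurable measurableSet_uIoc
  · filter_upwards [ae_restrict_mem measurableSet_uIoc] with s hs
    exact hpinch.abs_integral_one_le hf (hpos s hs)

theorem integral_primitive_bounds_of_le_one (hf : ContinuousOn f (Ioi 0))
    (hpinch : IsPinchedByInv f c C) {r : ℝ} (hr0 : 0 ≤ r) (hr1 : r ≤ 1) :
    C * (r * log r - r) ≤ ∫ s in (0 : ℝ)..r, ∫ w in (1 : ℝ)..s, f w ∧
      ∫ s in (0 : ℝ)..r, ∫ w in (1 : ℝ)..s, f w ≤ c * (r * log r - r) := by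
  have hval : ∀ k : ℝ, ∫ s in (0 : ℝ)..r, k * log s = k * (r * log r - r) := fun k => by
    simp [integral_log]
  have hlog : ∀ k : ℝ, IntervalIntegrable (fun s => k * log s) volume 0 r := fun k =>
    intervalIntegrable_log'.const_mul k
  have hG := hpinch.intervalIntegrable_integral_one hf hr0
  rw [← hval c, ← hval C]
  exact ⟨integral_mono_on_of_le_Ioo hr0 (hlog C) hG fun s hs =>
      (hpinch.integral_one_bounds_of_le_one hf hs.1 (hs.2.le.trans hr1)).1,
    integral_mono_on_of_le_Ioo hr0 hG (hlog c) fun s hs =>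
      (hpinch.integral_one_bounds_of_le_one hf hs.1 (hs.2.le.trans hr1)).2⟩

theorem integral_primitive_bounds_of_one_le (hf : ContinuousOn f (Ioi 0))
    (hpinch : IsPinchedByInv f c C) {r : ℝ} (hr : 1 ≤ r) :
    (∫ s in (0 : ℝ)..1, ∫ w in (1 : ℝ)..s, f w) + c * (r * log r - r + 1) ≤
        ∫ s in (0 : ℝ)..r, ∫ w in (1 : ℝ)..s, f w ∧
      ∫ s in (0 : ℝ)..r, ∫ w in (1 : ℝ)..s, f w ≤
        (∫ s in (0 : ℝ)..1, ∫ w in (1 : ℝ)..s, f w) + C * (r * log r - r + 1) := by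
  have hval : ∀ k : ℝ, ∫ s in (1 : ℝ)..r, k * log s = k * (r * log r - r + 1) := fun k => by
    simp only [intervalIntegral.integral_const_mul, integral_log, log_one]
    ring
  have hlog : ∀ k : ℝ, IntervalIntegrable (fun s => k * log s) volume 1 r := fun k =>
    intervalIntegrable_log'.const_mul k
  have hG₀₁ := hpinch.intervalIntegrable_integral_one hf zero_le_one
  have hG₁ᵣ : IntervalIntegrable (fun s => ∫ w in (1 : ℝ)..s, f w) volume 1 r :=
    (hG₀₁.symm.trans (hpinch.intervalIntegrable_integral_one hf (zero_le_one.trans hr)))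
  rw [← integral_add_adjacent_intervals hG₀₁ hG₁ᵣ, ← hval c, ← hval C]
  exact ⟨add_le_add le_rfl (integral_mono_on hr (hlog c) hG₁ᵣ fun s hs =>
      (hpinch.integral_one_bounds_of_one_le hf hs.1).1),
    add_le_add le_rfl (integral_mono_on hr hG₁ᵣ (hlog C) fun s hs =>
      (hpinch.integral_one_bounds_of_one_le hf hs.1).2)⟩

theorem abs_primitive_le (hf : ContinuousOn f (Ioi 0)) (hpinch : IsPinchedByInv f c C)
    {r : ℝ} (hr : 0 ≤ r) :
    |∫ s in (0 : ℝ)..r, ∫ w in (1 : ℝ)..s, f w| ≤ (|c| + |C|) * |r * log r| +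
      (|c| + |C| + |∫ s in (0 : ℝ)..1, ∫ w in (1 : ℝ)..s, f w|) * r := by
  have hsmall := fun h1 : r ≤ 1 => hpinch.integral_primitive_bounds_of_le_one hf hr h1
  have hlarge := fun h1 : 1 ≤ r => hpinch.integral_primitive_bounds_of_one_le hf h1
  generalize (∫ s in (0 : ℝ)..r, ∫ w in (1 : ℝ)..s, f w) = H at hsmall hlarge ⊢
  generalize (∫ s in (0 : ℝ)..1, ∫ w in (1 : ℝ)..s, f w) = H₁ at hlarge ⊢
  have hK : 0 ≤ |c| + |C| := by positivity
  rcases le_total r 1 with h1 | h1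
  · obtain ⟨hlo, hhi⟩ := hsmall h1
    have hH := abs_le_add_abs_mul_of_mul_le_of_le_mul hlo hhi
    have : |r * log r - r| ≤ |r * log r| + r := (abs_sub _ _).trans_eq (by rw [abs_of_nonneg hr])
    nlinarith [abs_nonneg H₁]
  · obtain ⟨hlo, hhi⟩ := hlarge h1
    have hH := abs_le_add_abs_mul_of_mul_le_of_le_mul (a := c) (b := C)
      (x := r * log r - r + 1) (y := H - H₁) (by linarith) (by linarith)
    have : |r * log r - r + 1| ≤ |r * log r| + r := by
      rw [sub_add]
      refine (abs_sub _ _).trans ?_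
      rw [abs_of_nonneg (by linarith : (0 : ℝ) ≤ r - 1)]
      linarith
    nlinarith [abs_sub_abs_le_abs_sub H H₁, abs_nonneg H₁]

theorem abs_mul_log_le (hf : ContinuousOn f (Ioi 0)) (hpinch : IsPinchedByInv f c C)
    (hc : 0 < c) {r : ℝ} (hr : 0 ≤ r) :
    |r * log r| ≤ c⁻¹ * |∫ s in (0 : ℝ)..r, ∫ w in (1 : ℝ)..s, f w| +
      (c⁻¹ * |∫ s in (0 : ℝ)..1, ∫ w in (1 : ℝ)..s, f w| + 1) * r := by
  have hsmall := fun h1 : r ≤ 1 => hpinch.integral_primitive_bounds_of_le_one hf hr h1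
  have hlarge := fun h1 : 1 ≤ r => hpinch.integral_primitive_bounds_of_one_le hf h1
  generalize (∫ s in (0 : ℝ)..r, ∫ w in (1 : ℝ)..s, f w) = H at hsmall hlarge ⊢
  generalize (∫ s in (0 : ℝ)..1, ∫ w in (1 : ℝ)..s, f w) = H₁ at hlarge ⊢
  have key : c * |r * log r| ≤ |H| + (|H₁| + c) * r := by
    rcases le_total r 1 with h1 | h1
    · have hneg : r * log r ≤ 0 := mul_nonpos_of_nonneg_of_nonpos hr (log_nonpos hr h1)
      rw [abs_of_nonpos hneg]
      nlinarith [(hsmall h1).2, neg_abs_le H, abs_nonneg H₁, mul_nonneg hc.le hr]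
    · have hpos : 0 ≤ r * log r := mul_nonneg hr (log_nonneg h1)
      rw [abs_of_nonneg hpos]
      nlinarith [(hlarge h1).1, le_abs_self H, neg_abs_le H₁, abs_nonneg H₁]
  calc |r * log r| = c⁻¹ * (c * |r * log r|) := by field_simp
    _ ≤ c⁻¹ * (|H| + (|H₁| + c) * r) := by gcongr
    _ = c⁻¹ * |H| + (c⁻¹ * |H₁| + 1) * r := by field_simp

end IsPinchedByInv

theorem MeasureTheory.Integrable.comp_of_abs_le {α : Type*} [MeasurableSpace α] {μ : Measure α}
    {v : α → ℝ} {F Φ : ℝ → ℝ} {A B : ℝ} (hΦ : Integrable (fun x => Φ (v x)) μ)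
    (hv : Integrable v μ) (hv0 : ∀ x, 0 ≤ v x) (hF : AEStronglyMeasurable (fun x => F (v x)) μ)
    (hle : ∀ r, 0 ≤ r → |F r| ≤ A * |Φ r| + B * r) :
    Integrable (fun x => F (v x)) μ :=
  ((hΦ.abs.const_mul A).add (hv.const_mul B)).mono' hF
    (ae_of_all _ fun x => (Real.norm_eq_abs _).trans_le (hle (v x) (hv0 x)))

theorem isPinchedByInv_deriv_div {β b : ℝ → ℝ} {γ γ₁ b₀ B : ℝ} (hγ : 0 < γ)
    (hβ'_lb : ∀ r, γ ≤ deriv β r) (hβ'_ub : ∀ r, deriv β r ≤ γ₁) (hb₀ : 0 < b₀)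
    (hb_lb : ∀ r, b₀ ≤ b r) (hb_ub : ∀ r, b r ≤ B) :
    IsPinchedByInv (fun w => deriv β w / (w * b w)) (γ / B) (γ₁ / b₀) := by
  intro w hw
  rw [div_div, div_div, mul_comm B, mul_comm b₀]
  have hbw : 0 < b w := hb₀.trans_le (hb_lb w)
  exact ⟨div_le_div₀ (hγ.le.trans (hβ'_lb w)) (hβ'_lb w) (mul_pos hw hbw)
      (mul_le_mul_of_nonneg_left (hb_ub w) hw.le),
    div_le_div₀ ((hγ.le.trans (hβ'_lb w)).trans (hβ'_ub w)) (hβ'_ub w) (mul_pos hw hb₀)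
      (mul_le_mul_of_nonneg_left (hb_lb w) hw.le)⟩

theorem continuousOn_deriv_div {β b : ℝ → ℝ} (hβ : ContDiff ℝ 1 β) (hb_cont : Continuous b)
    (hb : ∀ r, 0 < b r) : ContinuousOn (fun w => deriv β w / (w * b w)) (Ioi 0) :=
  (hβ.continuous_deriv le_rfl).continuousOn.div (continuous_id.mul hb_cont).continuousOn
    fun w hw => (mul_pos hw (hb w)).ne'

theorem stmt_8_general (β b : ℝ → ℝ)
    (hβ : ContDiff ℝ 1 β)
    (γ γ₁ : ℝ) (hγ : 0 < γ)
    (hβ'_lb : ∀ r, γ ≤ deriv β r) (hβ'_ub : ∀ r, deriv β r ≤ γ₁)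
    (hb_cont : Continuous b)
    (b₀ B : ℝ) (hb₀ : 0 < b₀)
    (hb_lb : ∀ r, b₀ ≤ b r) (hb_ub : ∀ r, b r ≤ B)
    (d : ℕ) (v : EuclideanSpace ℝ (Fin d) → ℝ)
    (hv_meas : Measurable v) (hv_nonneg : ∀ x, 0 ≤ v x)
    (hv_int : ∫⁻ x, ENNReal.ofReal (v x) = 1) :
    Integrable (fun x => etaFun β b (v x)) volume ↔
    Integrable (fun x => v x * Real.log (v x)) volume := by
  have hb : ∀ r, 0 < b r := fun r => hb₀.trans_le (hb_lb r)
  have hc : 0 < γ / B := div_pos hγ ((hb 0).trans_le (hb_ub 0))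
  have hf := continuousOn_deriv_div hβ hb_cont hb
  have hpinch := isPinchedByInv_deriv_div hγ hβ'_lb hβ'_ub hb₀ hb_lb hb_ub
  have hv : Integrable v volume := by
    rw [← lintegral_ofReal_ne_top_iff_integrable hv_meas.aestronglyMeasurable
      (ae_of_all _ hv_nonneg), hv_int]
    exact ENNReal.one_ne_top
  have hη_meas : AEStronglyMeasurable (fun x => etaFun β b (v x)) volume :=
    ((continuousOn_primitive_Ici fun _ hr => hpinch.intervalIntegrable_integral_one hf hr
      ).domRestrict.measurable.comp (hv_meas.subtype_mk (h := hv_nonneg))).aestronglyMeasurable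
  have hψ_meas : AEStronglyMeasurable (fun x => v x * Real.log (v x)) volume :=
    (continuous_mul_log.measurable.comp hv_meas).aestronglyMeasurable
  exact ⟨fun h => h.comp_of_abs_le hv hv_nonneg hψ_meas fun _ hr => hpinch.abs_mul_log_le hf hc hr,
    fun h => h.comp_of_abs_le hv hv_nonneg hη_meas fun _ hr => hpinch.abs_primitive_le hf hr⟩

/-- Assume `β ∈ C¹(ℝ)`, `β(0) = 0`, `0 < γ ≤ β' ≤ γ₁ < ∞`, and `b`
continuous with `0 < b₀ ≤ b ≤ B < ∞`. Let `v : ℝ^d → [0,∞)` be Lebesgue measurable with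
`∫ v dx = 1`. Then `x ↦ η(v(x))` is Lebesgue integrable iff `x ↦ v(x)·log v(x)` is.
(In Lean `Real.log 0 = 0`, so the convention `0·log 0 = 0` is automatic.) -/
theorem stmt_8 (β b : ℝ → ℝ)
    (hβ : ContDiff ℝ 1 β) (hβ0 : β 0 = 0)
    (γ γ₁ : ℝ) (hγ : 0 < γ)
    (hβ'_lb : ∀ r, γ ≤ deriv β r) (hβ'_ub : ∀ r, deriv β r ≤ γ₁)
    (hb_cont : Continuous b)
    (b₀ B : ℝ) (hb₀ : 0 < b₀)
    (hb_lb : ∀ r, b₀ ≤ b r) (hb_ub : ∀ r, b r ≤ B)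
    (d : ℕ) (v : EuclideanSpace ℝ (Fin d) → ℝ)
    (hv_meas : Measurable v) (hv_nonneg : ∀ x, 0 ≤ v x)
    (hv_int : ∫⁻ x, ENNReal.ofReal (v x) = 1) :
    Integrable (fun x => etaFun β b (v x)) volume ↔
    Integrable (fun x => v x * Real.log (v x)) volume :=
  stmt_8_general β b hβ γ γ₁ hγ hβ'_lb hβ'_ub hb_cont b₀ B hb₀ hb_lb hb_ub d v hv_meas hv_nonneg
    hv_int
end

section
/- Let m > 1, let φ: ℝ^d → ℝ^d be twice continuously differentiable with compact support, and let v: ℝ^d → [0,∞) be measurable and bounded with ∫_{ℝ^d} v(x)^m dx < ∞. Then there is ε > 0 such that the map τ ↦ ∫_{ℝ^d} v(x)^m · (det(I + τ·Dφ(x + τφ(x))))^{−m} · det(I + τ·Dφ(x)) dx is well defined on (−ε,ε) (all determinants being positive there) and differentiable at τ = 0 with derivative (1 − m)·∫_{ℝ^d} v(x)^m · div φ(x) dx. -/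
/-!
Write the integrand as `v(x)^m g(τ, x)` with
`g(τ, x) = det(I + τ Dφ(x + τ φ(x)))^(-m) det(I + τ Dφ(x))`. Both determinants equal `1` at
`τ = 0` and, for every `τ`, off the compact set `supp φ`; by the tube lemma they therefore stay
positive on a whole strip `(-ε, ε) × ℝ^d`, on which `g` is `C¹`. Its `τ`-derivative is continuous
and vanishes off `supp φ`, so it is bounded on `[-ε/2, ε/2] × ℝ^d`, and dominated convergence
against the integrable `v^m` lets us differentiate under the integral sign. Finally
`d/dτ det(I + τ A(τ))` at `0` is `tr A(0)`, since only the identity permutation contributes to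
the derivative of the Leibniz expansion, whence `∂_τ g(0, x) = (1 - m) div φ(x)`.
-/

open MeasureTheory Real Set

/-- The Jacobian matrix of a map `φ : ℝ^d → ℝ^d` at a point `x`:
`(Dφ(x))_{ij} = ∂_j φ_i (x)`. -/
noncomputable def jacobianMatrix {d : ℕ} (φ : EuclideanSpace ℝ (Fin d) → EuclideanSpace ℝ (Fin d))
    (x : EuclideanSpace ℝ (Fin d)) : Matrix (Fin d) (Fin d) ℝ :=
  Matrix.of fun i j => fderiv ℝ φ x (EuclideanSpace.single j 1) i


section Det

variable {𝕜 : Type*} [NontriviallyNormedField 𝕜] {ι : Type*} [Fintype ι] [DecidableEq ι]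

theorem contDiff_det_of_forall_entry {P : Type*} [NormedAddCommGroup P] [NormedSpace 𝕜 P]
    {n : WithTop ℕ∞} {A : P → Matrix ι ι 𝕜} (hA : ∀ i j, ContDiff 𝕜 n fun p => A p i j) :
    ContDiff 𝕜 n fun p => (A p).det := by
  simp only [Matrix.det_apply]
  exact ContDiff.sum fun σ _ => (contDiff_prod fun i _ => hA (σ i) i).const_smul _

theorem Equiv.Perm.prod_erase_one_apply_eq_zero {σ : Equiv.Perm ι} (hσ : σ ≠ 1) (i : ι) :
    ∏ j ∈ Finset.univ.erase i, (1 : Matrix ι ι 𝕜) (σ j) j = 0 := by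
  obtain ⟨j, hj⟩ : ((σ.support).erase i).Nonempty := by
    rw [← Finset.card_pos, Finset.card_erase_eq_ite]
    have := Equiv.Perm.two_le_card_support_of_ne_one hσ
    split_ifs <;> omega
  obtain ⟨hji, hjσ⟩ := Finset.mem_erase.1 hj
  exact Finset.prod_eq_zero (Finset.mem_erase.2 ⟨hji, Finset.mem_univ j⟩)
    (Matrix.one_apply_ne (Equiv.Perm.mem_support.1 hjσ))

theorem hasDerivAt_det_of_eq_one {N : 𝕜 → Matrix ι ι 𝕜} {N' : Matrix ι ι 𝕜} {t : 𝕜}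
    (hN' : ∀ i j, HasDerivAt (fun τ => N τ i j) (N' i j) t) (hN : N t = 1) :
    HasDerivAt (fun τ => (N τ).det) N'.trace t := by
  simp only [Matrix.det_apply]
  have hterm (σ : Equiv.Perm ι) : HasDerivAt (fun τ => Equiv.Perm.sign σ • ∏ i, N τ (σ i) i)
      (if σ = 1 then N'.trace else 0) t := by
    refine ((HasDerivAt.fun_finsetProd (u := Finset.univ) fun i _ => hN' (σ i) i).const_smul
      (Equiv.Perm.sign σ)).congr_deriv ?_
    split_ifs with hσ
    · subst hσ
      simp [hN, Matrix.trace]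
    · simp [hN, Equiv.Perm.prod_erase_one_apply_eq_zero hσ]
  refine (HasDerivAt.fun_sum (u := Finset.univ) fun σ _ => hterm σ).congr_deriv ?_
  simp

theorem hasDerivAt_det_one_add_smul {A : 𝕜 → Matrix ι ι 𝕜}
    (hA : ∀ i j, DifferentiableAt 𝕜 (fun τ => A τ i j) 0) :
    HasDerivAt (fun τ => (1 + τ • A τ).det) (A 0).trace 0 := by
  refine hasDerivAt_det_of_eq_one (fun i j => ?_) (by simp)
  simpa using ((hasDerivAt_id (0 : 𝕜)).mul (hA i j).hasDerivAt).const_add ((1 : Matrix ι ι 𝕜) i j)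

end Det

section ParametricIntegral

theorem exists_Ioo_prod_univ_subset {E : Type*} [TopologicalSpace E] {U : Set (ℝ × E)}
    {K : Set E} (hU : IsOpen U) (hK : IsCompact K) (hU₀ : ∀ x ∈ K, ((0 : ℝ), x) ∈ U)
    (hU_off : ∀ τ, ∀ x ∉ K, (τ, x) ∈ U) :
    ∃ ε > 0, Ioo (-ε) ε ×ˢ univ ⊆ U := by
  obtain ⟨V, W, hV, -, hV₀, hKW, hVW⟩ := generalized_tube_lemma isCompact_singleton hK hU
    (by rintro ⟨τ, x⟩ ⟨rfl, hx⟩; exact hU₀ x hx)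
  obtain ⟨ε, hε, hball⟩ := Metric.isOpen_iff.1 hV 0 (hV₀ rfl)
  refine ⟨ε, hε, fun ⟨τ, x⟩ ⟨hτ, _⟩ => ?_⟩
  by_cases hx : x ∈ K
  · refine hVW ⟨hball ?_, hKW hx⟩
    rwa [Metric.mem_ball, Real.dist_0_eq_abs, abs_lt]
  · exact hU_off τ x hx

theorem exists_bound_of_continuousOn_of_eq_off {X E F : Type*} [TopologicalSpace X]
    [TopologicalSpace E] [NormedAddCommGroup F] {f : X × E → F} {s : Set X} {K : Set E}
    (hs : IsCompact s) (hK : IsCompact K) (hf : ContinuousOn f (s ×ˢ K)) (c : F)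
    (hf_off : ∀ τ, ∀ x ∉ K, f (τ, x) = c) :
    ∃ C, ∀ τ ∈ s, ∀ x, ‖f (τ, x)‖ ≤ C := by
  obtain ⟨C, hC⟩ := (hs.prod hK).exists_bound_of_continuousOn hf
  refine ⟨max C ‖c‖, fun τ hτ x => ?_⟩
  by_cases hx : x ∈ K
  · exact (hC (τ, x) ⟨hτ, hx⟩).trans (le_max_left _ _)
  · exact (hf_off τ x hx).symm ▸ le_max_right _ _

variable {E : Type*} [NormedAddCommGroup E] {g : ℝ × E → ℝ} {K : Set E} {ε : ℝ}

theorem exists_bound_fderiv_apply_of_contDiffOn [NormedSpace ℝ E] (hε : 0 < ε)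
    (hg : ContDiffOn ℝ 1 g (Ioo (-ε) ε ×ˢ univ)) (hK : IsCompact K) (c : ℝ)
    (hg_off : ∀ τ, ∀ x ∉ K, g (τ, x) = c) :
    ∃ C, ∀ τ ∈ Icc (-(ε / 2)) (ε / 2), ∀ x, ‖fderiv ℝ g (τ, x) (1, 0)‖ ≤ C := by
  have hS : IsOpen (Ioo (-ε) ε ×ˢ (univ : Set E)) := isOpen_Ioo.prod isOpen_univ
  have hcont : ContinuousOn (fun p => fderiv ℝ g p (1, 0)) (Ioo (-ε) ε ×ˢ univ) :=
    (ContinuousLinearMap.apply ℝ ℝ ((1 : ℝ), (0 : E))).continuous.comp_continuousOn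
      (hg.continuousOn_fderiv_of_isOpen hS le_rfl)
  have hoff : ∀ τ, ∀ x ∉ K, fderiv ℝ g (τ, x) (1, 0) = 0 := by
    intro τ x hx
    have hconst : g =ᶠ[nhds (τ, x)] fun _ => c :=
      Filter.eventuallyEq_of_mem ((hK.isClosed.isOpen_compl.preimage continuous_snd).mem_nhds hx)
        fun p hp => hg_off p.1 p.2 hp
    simp [hconst.fderiv_eq]
  have hIcc : Icc (-(ε / 2)) (ε / 2) ⊆ Ioo (-ε) ε := Icc_subset_Ioo (by linarith) (by linarith)
  exact exists_bound_of_continuousOn_of_eq_off isCompact_Icc hK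
    (hcont.mono (prod_mono hIcc (subset_univ K))) 0 hoff

variable [MeasurableSpace E] [OpensMeasurableSpace E] {μ : Measure E} {w : E → ℝ}

theorem integrable_mul_of_continuousOn_of_eq_off (hw : Integrable w μ)
    (hg : ContinuousOn g (Ioo (-ε) ε ×ˢ univ)) (hK : IsCompact K) (c : ℝ)
    (hg_off : ∀ τ, ∀ x ∉ K, g (τ, x) = c) {τ : ℝ} (hτ : τ ∈ Ioo (-ε) ε) :
    Integrable (fun x => w x * g (τ, x)) μ := by
  obtain ⟨C, hC⟩ := exists_bound_of_continuousOn_of_eq_off isCompact_singleton hK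
    (hg.mono (prod_mono (singleton_subset_iff.2 hτ) (subset_univ K))) c hg_off
  have hslice : Continuous fun x => g (τ, x) :=
    hg.comp_continuous (continuous_const.prodMk continuous_id) fun x => ⟨hτ, mem_univ x⟩
  exact hw.mul_bdd hslice.aestronglyMeasurable (ae_of_all _ fun x => hC τ rfl x)

theorem hasDerivAt_integral_mul_of_contDiffOn [NormedSpace ℝ E] (hw : Integrable w μ)
    (hε : 0 < ε) (hg : ContDiffOn ℝ 1 g (Ioo (-ε) ε ×ˢ univ)) (hK : IsCompact K) (c : ℝ)
    (hg_off : ∀ τ, ∀ x ∉ K, g (τ, x) = c) {g' : E → ℝ}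
    (hg' : ∀ x, HasDerivAt (fun τ => g (τ, x)) (g' x) 0) :
    (∀ τ ∈ Ioo (-ε) ε, Integrable (fun x => w x * g (τ, x)) μ) ∧
      HasDerivAt (fun τ => ∫ x, w x * g (τ, x) ∂μ) (∫ x, w x * g' x ∂μ) 0 := by
  have hint := fun τ (hτ : τ ∈ Ioo (-ε) ε) =>
    integrable_mul_of_continuousOn_of_eq_off hw hg.continuousOn hK c hg_off hτ
  have hS : IsOpen (Ioo (-ε) ε ×ˢ (univ : Set E)) := isOpen_Ioo.prod isOpen_univ
  have hdg : ∀ τ ∈ Ioo (-ε) ε, ∀ x,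
      HasDerivAt (fun s => g (s, x)) (fderiv ℝ g (τ, x) (1, 0)) τ :=
    fun τ hτ x => ((hg.differentiableOn one_ne_zero _ ⟨hτ, mem_univ x⟩).differentiableAt
      (hS.mem_nhds ⟨hτ, mem_univ x⟩)).hasFDerivAt.comp_hasDerivAt τ
      ((hasDerivAt_id τ).prodMk (hasDerivAt_const τ x))
  have h0 : (0 : ℝ) ∈ Ioo (-ε) ε := ⟨by linarith, hε⟩
  have hdg₀ : ∀ x, fderiv ℝ g (0, x) (1, 0) = g' x := fun x => (hdg 0 h0 x).unique (hg' x)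
  obtain ⟨C, hC⟩ := exists_bound_fderiv_apply_of_contDiffOn hε hg hK c hg_off
  have hderiv := hasDerivAt_integral_of_dominated_loc_of_deriv_le (μ := μ)
    (F := fun τ x => w x * g (τ, x)) (F' := fun τ x => w x * fderiv ℝ g (τ, x) (1, 0))
    (Icc_mem_nhds (by linarith : -(ε / 2) < 0) (by linarith : (0 : ℝ) < ε / 2))
    (Filter.eventually_of_mem (Ioo_mem_nhds h0.1 h0.2) fun τ hτ => (hint τ hτ).1)
    (hint 0 h0)
    (hw.1.mul (((hg.continuousOn_fderiv_of_isOpen hS le_rfl).comp_continuous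
      (continuous_const.prodMk continuous_id) fun x => ⟨h0, mem_univ x⟩).clm_apply
        continuous_const).aestronglyMeasurable)
    (ae_of_all _ fun x τ hτ => by
      rw [norm_mul, mul_comm]
      exact mul_le_mul_of_nonneg_right (hC τ hτ x) (norm_nonneg _))
    (hw.norm.const_mul C)
    (ae_of_all _ fun x τ hτ =>
      (hdg τ (Icc_subset_Ioo (by linarith) (by linarith) hτ) x).const_mul (w x))
  simp only [hdg₀] at hderiv
  exact ⟨hint, hderiv.2⟩

end ParametricIntegral

section Jacobian

variable {d : ℕ} {φ : EuclideanSpace ℝ (Fin d) → EuclideanSpace ℝ (Fin d)}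

theorem contDiff_jacobianMatrix_apply {n k : WithTop ℕ∞} (hφ : ContDiff ℝ n φ) (hk : k + 1 ≤ n)
    (i j : Fin d) : ContDiff ℝ k fun x => jacobianMatrix φ x i j :=
  (EuclideanSpace.proj (𝕜 := ℝ) i).contDiff.comp
    ((hφ.fderiv_right hk).clm_apply (contDiff_const (c := EuclideanSpace.single j 1)))

theorem jacobianMatrix_eq_zero_of_notMem_tsupport {x : EuclideanSpace ℝ (Fin d)}
    (hx : x ∉ tsupport φ) : jacobianMatrix φ x = 0 := by
  have h : fderiv ℝ φ x = 0 :=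
    image_eq_zero_of_notMem_tsupport fun hmem => hx (tsupport_fderiv_subset ℝ hmem)
  ext i j
  simp [jacobianMatrix, h]

variable (φ) in
/-- The Jacobian determinant of `Id + τ • φ` at `x`. -/
noncomputable def jacDetPerturb (p : ℝ × EuclideanSpace ℝ (Fin d)) : ℝ :=
  (1 + p.1 • jacobianMatrix φ p.2).det

variable (φ) in
/-- The integrand of the theorem is `v x ^ m * densityFactor φ m (τ, x)`. -/
noncomputable def densityFactor (m : ℝ) (p : ℝ × EuclideanSpace ℝ (Fin d)) : ℝ :=
  jacDetPerturb φ (p.1, p.2 + p.1 • φ p.2) ^ (-m) * jacDetPerturb φ p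

theorem contDiff_jacDetPerturb {n k : WithTop ℕ∞} (hφ : ContDiff ℝ n φ) (hk : k + 1 ≤ n) :
    ContDiff ℝ k (jacDetPerturb φ) :=
  contDiff_det_of_forall_entry fun i j => contDiff_const.add
    (contDiff_fst.mul ((contDiff_jacobianMatrix_apply hφ hk i j).comp contDiff_snd))

theorem contDiff_jacDetPerturb_add_smul {n k : WithTop ℕ∞} (hφ : ContDiff ℝ n φ)
    (hk : k + 1 ≤ n) :
    ContDiff ℝ k fun p : ℝ × EuclideanSpace ℝ (Fin d) => jacDetPerturb φ (p.1, p.2 + p.1 • φ p.2) :=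
  (contDiff_jacDetPerturb hφ hk).comp (contDiff_fst.prodMk (contDiff_snd.add
    (contDiff_fst.smul ((hφ.of_le (le_self_add.trans hk)).comp contDiff_snd))))

@[simp]
theorem jacDetPerturb_zero_left (x : EuclideanSpace ℝ (Fin d)) : jacDetPerturb φ (0, x) = 1 := by
  simp [jacDetPerturb]

theorem jacDetPerturb_of_notMem_tsupport (τ : ℝ) {x : EuclideanSpace ℝ (Fin d)}
    (hx : x ∉ tsupport φ) : jacDetPerturb φ (τ, x) = 1 := by
  simp [jacDetPerturb, jacobianMatrix_eq_zero_of_notMem_tsupport hx]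

theorem jacDetPerturb_add_smul_of_notMem_tsupport (τ : ℝ) {x : EuclideanSpace ℝ (Fin d)}
    (hx : x ∉ tsupport φ) : jacDetPerturb φ (τ, x + τ • φ x) = 1 := by
  rw [image_eq_zero_of_notMem_tsupport hx, smul_zero, add_zero,
    jacDetPerturb_of_notMem_tsupport τ hx]

theorem densityFactor_of_notMem_tsupport (m τ : ℝ) {x : EuclideanSpace ℝ (Fin d)}
    (hx : x ∉ tsupport φ) : densityFactor φ m (τ, x) = 1 := by
  simp [densityFactor, jacDetPerturb_of_notMem_tsupport τ hx,
    jacDetPerturb_add_smul_of_notMem_tsupport τ hx]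

theorem hasDerivAt_jacDetPerturb_add_smul (hφ : ContDiff ℝ 2 φ) (x : EuclideanSpace ℝ (Fin d)) :
    HasDerivAt (fun τ => jacDetPerturb φ (τ, x + τ • φ x)) (jacobianMatrix φ x).trace 0 := by
  refine (hasDerivAt_det_one_add_smul fun i j => ?_).congr_deriv (by simp)
  exact ((contDiff_jacobianMatrix_apply (k := 1) hφ (by norm_num) i j).differentiable
    one_ne_zero _).comp _ (differentiableAt_const _ |>.add (differentiableAt_id.smul_const _))

theorem hasDerivAt_jacDetPerturb (x : EuclideanSpace ℝ (Fin d)) :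
    HasDerivAt (fun τ => jacDetPerturb φ (τ, x)) (jacobianMatrix φ x).trace 0 :=
  hasDerivAt_det_one_add_smul (A := fun _ => jacobianMatrix φ x) fun _ _ =>
    differentiableAt_const _

theorem hasDerivAt_densityFactor (hφ : ContDiff ℝ 2 φ) (m : ℝ) (x : EuclideanSpace ℝ (Fin d)) :
    HasDerivAt (fun τ => densityFactor φ m (τ, x)) ((1 - m) * (jacobianMatrix φ x).trace) 0 := by
  have h := ((hasDerivAt_jacDetPerturb_add_smul hφ x).rpow_const (p := -m) (by simp)).mul
    (hasDerivAt_jacDetPerturb (φ := φ) x)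
  refine h.congr_deriv ?_
  simp only [zero_smul, add_zero, jacDetPerturb_zero_left, one_rpow, mul_one]
  ring

end Jacobian

theorem stmt_12_general (d : ℕ) (m : ℝ)
    (φ : EuclideanSpace ℝ (Fin d) → EuclideanSpace ℝ (Fin d))
    (hφ : ContDiff ℝ 2 φ) (hφc : HasCompactSupport φ)
    (v : EuclideanSpace ℝ (Fin d) → ℝ)
    (hvm_int : Integrable (fun x => v x ^ m) volume) :
    ∃ ε > (0 : ℝ),
      (∀ τ ∈ Ioo (-ε) ε, ∀ x,
        0 < (1 + τ • jacobianMatrix φ (x + τ • φ x)).det ∧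
        0 < (1 + τ • jacobianMatrix φ x).det) ∧
      (∀ τ ∈ Ioo (-ε) ε,
        Integrable (fun x =>
          v x ^ m * ((1 + τ • jacobianMatrix φ (x + τ • φ x)).det) ^ (-m) *
            (1 + τ • jacobianMatrix φ x).det) volume) ∧
      HasDerivAt
        (fun τ : ℝ => ∫ x,
          v x ^ m * ((1 + τ • jacobianMatrix φ (x + τ • φ x)).det) ^ (-m) *
            (1 + τ • jacobianMatrix φ x).det)
        ((1 - m) * ∫ x, v x ^ m * (jacobianMatrix φ x).trace) 0 := by
  have hG := contDiff_jacDetPerturb_add_smul (k := 1) hφ le_rfl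
  have hH := contDiff_jacDetPerturb (k := 1) hφ le_rfl
  obtain ⟨ε, hε, hpos⟩ := exists_Ioo_prod_univ_subset
    (U := {p | 0 < jacDetPerturb φ (p.1, p.2 + p.1 • φ p.2) ∧ 0 < jacDetPerturb φ p})
    ((isOpen_lt continuous_const hG.continuous).inter (isOpen_lt continuous_const hH.continuous))
    hφc (fun x _ => by simp)
    (fun τ x hx => by simp [jacDetPerturb_of_notMem_tsupport τ hx,
      jacDetPerturb_add_smul_of_notMem_tsupport τ hx])
  have hg : ContDiffOn ℝ 1 (densityFactor φ m) (Ioo (-ε) ε ×ˢ univ) := fun p hp =>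
    ((hG.contDiffAt.rpow_const_of_ne (hpos hp).1.ne').mul hH.contDiffAt).contDiffWithinAt
  obtain ⟨hint, hderiv⟩ := hasDerivAt_integral_mul_of_contDiffOn hvm_int hε hg hφc 1
    (fun τ x hx => densityFactor_of_notMem_tsupport m τ hx) (hasDerivAt_densityFactor hφ m)
  refine ⟨ε, hε, fun τ hτ x => @hpos (τ, x) ⟨hτ, mem_univ x⟩, fun τ hτ => ?_, ?_⟩
  · simpa only [densityFactor, jacDetPerturb, mul_assoc] using hint τ hτ
  · simp_rw [mul_left_comm (v _ ^ m) (1 - m), integral_const_mul] at hderiv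
    simpa only [densityFactor, jacDetPerturb, mul_assoc] using hderiv

/-- Let `m > 1`, `φ : ℝ^d → ℝ^d` twice continuously differentiable with
compact support, and `v : ℝ^d → [0,∞)` measurable and bounded with `∫ v^m dx < ∞`. Then
there is `ε > 0` such that
`τ ↦ ∫ v(x)^m·(det(I + τ·Dφ(x + τφ(x))))^(−m)·det(I + τ·Dφ(x)) dx`
is well defined on `(−ε,ε)` (all determinants being positive there) and differentiable at
`τ = 0` with derivative `(1 − m)·∫ v(x)^m·div φ(x) dx`. -/
theorem stmt_12 (d : ℕ) (m : ℝ) (hm : 1 < m)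
    (φ : EuclideanSpace ℝ (Fin d) → EuclideanSpace ℝ (Fin d))
    (hφ : ContDiff ℝ 2 φ) (hφc : HasCompactSupport φ)
    (v : EuclideanSpace ℝ (Fin d) → ℝ)
    (hv_meas : Measurable v) (hv_nonneg : ∀ x, 0 ≤ v x)
    (hv_bdd : ∃ M : ℝ, ∀ x, v x ≤ M)
    (hvm_int : Integrable (fun x => v x ^ m) volume) :
    ∃ ε > (0 : ℝ),
      (∀ τ ∈ Ioo (-ε) ε, ∀ x,
        0 < (1 + τ • jacobianMatrix φ (x + τ • φ x)).det ∧
        0 < (1 + τ • jacobianMatrix φ x).det) ∧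
      (∀ τ ∈ Ioo (-ε) ε,
        Integrable (fun x =>
          v x ^ m * ((1 + τ • jacobianMatrix φ (x + τ • φ x)).det) ^ (-m) *
            (1 + τ • jacobianMatrix φ x).det) volume) ∧
      HasDerivAt
        (fun τ : ℝ => ∫ x,
          v x ^ m * ((1 + τ • jacobianMatrix φ (x + τ • φ x)).det) ^ (-m) *
            (1 + τ • jacobianMatrix φ x).det)
        ((1 - m) * ∫ x, v x ^ m * (jacobianMatrix φ x).trace) 0 :=
  stmt_12_general d m φ hφ hφc v hvm_int
end

section
/- Let (μ_t)_{t>0} be Borel probability measures on ℝ^d such that t ↦ μ_t(A) is Borel measurable for every Borel set A. Let A: (0,∞)×ℝ^d → ℝ and B: (0,∞)×ℝ^d → ℝ^d be Borel functions with A and |B| locally Lebesgue-integrable on (0,∞)×ℝ^d, and suppose that for all 0 < s < t and all ζ ∈ C²_c(ℝ^d): ∫ζ dμ_t − ∫ζ dμ_s = ∫_s^t ∫_{ℝ^d} ( A(r,x)·Δζ(x) + B(r,x)·∇ζ(x) ) dx dr. Then there exists a Lebesgue-null set N ⊆ (0,∞) such that for every t ∈ (0,∞)∖N and every ζ ∈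 C²_c(ℝ^d), the map τ ↦ ∫ζ dμ_τ is differentiable at τ = t with derivative ∫_{ℝ^d} ( A(t,x)·Δζ(x) + B(t,x)·∇ζ(x) ) dx. -/
/-!
For test functions supported in a compact set `K`, the rate `g_ζ(r) = ∫ (A Δζ + B·∇ζ) dx`
depends on `ζ` only through its jet `(Δζ, Dζ)` on `K`, and
`|g_ζ(r) - g_η(r)| ≤ sup |jet ζ - jet η| · H_K(r)` with `H_K(r) = ∫_K (|A(r,·)| + |B(r,·)|)`,
which is locally integrable by Fubini. These jets lie in the separable space
`C(K, ℝ × (ℝ^d)*)`, so countably many test functions `η_n` are jet-dense. Off a null set of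
times, Lebesgue's differentiation theorem holds at once for the primitive of `H_K` and for all
`τ ↦ ∫ η_n dμ_τ`; approximating `ζ` by `η_n` then transfers differentiability to
`τ ↦ ∫ ζ dμ_τ`, with an error controlled by `ε` times the increments of the primitive of `H_K`.
Exhausting `ℝ^d` by the balls of integer radius gives a single null set.
-/

open MeasureTheory Real Set

/-- The Laplacian of `ζ : ℝ^d → ℝ` at `x`: `Δζ(x) = Σ_i ∂²_{ii} ζ(x)`. -/
noncomputable def lapl {d : ℕ} (ζ : EuclideanSpace ℝ (Fin d) → ℝ)
    (x : EuclideanSpace ℝ (Fin d)) : ℝ :=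
  ∑ i, fderiv ℝ (fun y => fderiv ℝ ζ y (EuclideanSpace.single i 1)) x
    (EuclideanSpace.single i 1)

open Filter Topology Metric
open scoped Interval

local notation "ℝ^" d:max => EuclideanSpace ℝ (Fin d)

theorem Ioi_subset_iUnion_Icc (a : ℝ) :
    Ioi a ⊆ ⋃ n : ℕ, Icc (a + ((n : ℝ) + 1)⁻¹) (a + ((n : ℝ) + 1)) := by
  intro r (hr : a < r)
  obtain ⟨n, hn⟩ := exists_nat_gt (max (r - a) (r - a)⁻¹)
  have hra : 0 < r - a := sub_pos.2 hr
  refine mem_iUnion.2 ⟨n, ?_, ?_⟩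
  · have : ((n : ℝ) + 1)⁻¹ ≤ r - a :=
      inv_le_of_inv_le₀ hra (by linarith [le_max_right (r - a) (r - a)⁻¹])
    linarith
  · linarith [le_max_left (r - a) (r - a)⁻¹]

theorem ae_restrict_Ioi_of_forall_Icc {p : ℝ → Prop} {a : ℝ}
    (h : ∀ b c, a < b → a < c → ∀ᵐ x ∂volume.restrict (Icc b c), p x) :
    ∀ᵐ x ∂volume.restrict (Ioi a), p x :=
  ae_restrict_of_ae_restrict_of_subset (Ioi_subset_iUnion_Icc a) <|
    (ae_restrict_iUnion_iff _ _).2 fun _ =>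
      h _ _ (lt_add_of_pos_right a (by positivity)) (lt_add_of_pos_right a (by positivity))

section LocallyIntegrableOn

variable {E : Type*} [NormedAddCommGroup E] {f : ℝ → E} {a : ℝ}

theorem MeasureTheory.LocallyIntegrableOn.intervalIntegrable_of_Ioi
    (hf : LocallyIntegrableOn f (Ioi a)) {b c : ℝ} (hb : a < b) (hc : a < c) :
    IntervalIntegrable f volume b c :=
  (hf.integrableOn_compact_subset (fun _ hx => (lt_min hb hc).trans_le hx.1)
    isCompact_uIcc).intervalIntegrable

theorem MeasureTheory.LocallyIntegrableOn.ae_hasDerivAt_integral_Ioi [NormedSpace ℝ E]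
    [CompleteSpace E] (hf : LocallyIntegrableOn f (Ioi a)) :
    ∀ᵐ x ∂volume.restrict (Ioi a), HasDerivAt (fun y => ∫ t in x..y, f t) (f x) x := by
  refine ae_restrict_Ioi_of_forall_Icc fun b c hb hc => ?_
  rw [ae_restrict_iff' measurableSet_Icc]
  filter_upwards [(hf.intervalIntegrable_of_Ioi hb hc).ae_hasDerivAt_integral] with x hx hxI
  exact hx (Icc_subset_uIcc hxI) x (Icc_subset_uIcc hxI)

theorem MeasureTheory.LocallyIntegrableOn.integral_sub_integral [NormedSpace ℝ E]
    (hf : LocallyIntegrableOn f (Ioi a)) {c s t : ℝ} (hc : a < c) (hs : a < s) (ht : a < t) :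
    (∫ r in c..t, f r) - ∫ r in c..s, f r = ∫ r in s..t, f r :=
  intervalIntegral.integral_interval_sub_left (hf.intervalIntegrable_of_Ioi hc ht)
    (hf.intervalIntegrable_of_Ioi hc hs)

end LocallyIntegrableOn

theorem sub_eq_integral_of_forall_lt {F f : ℝ → ℝ} {a : ℝ}
    (hF : ∀ s t, a < s → s < t → F t - F s = ∫ r in s..t, f r) {s t : ℝ} (hs : a < s)
    (ht : a < t) : F t - F s = ∫ r in s..t, f r := by
  rcases lt_trichotomy s t with hst | rfl | hts
  · exact hF s t hs hst
  · simp
  · rw [intervalIntegral.integral_symm, ← hF t s ht hts, neg_sub]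

theorem ae_hasDerivAt_of_sub_eq_integral {F f : ℝ → ℝ} {a : ℝ}
    (hf : LocallyIntegrableOn f (Ioi a))
    (hF : ∀ s t, a < s → s < t → F t - F s = ∫ r in s..t, f r) :
    ∀ᵐ t ∂volume.restrict (Ioi a), HasDerivAt F (f t) t := by
  rw [ae_restrict_iff' measurableSet_Ioi]
  filter_upwards [(ae_restrict_iff' measurableSet_Ioi).1 hf.ae_hasDerivAt_integral_Ioi]
    with t ht hat
  refine ((ht hat).const_add (F t)).congr_of_eventuallyEq ?_
  filter_upwards [Ioi_mem_nhds hat] with τ hτ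
  rw [← sub_eq_integral_of_forall_lt hF hat hτ, add_sub_cancel]

theorem eventually_abs_sub_sub_le {F G Φ f g H : ℝ → ℝ} {a t ε : ℝ} (ht : a < t)
    (hε : 0 ≤ ε)
    (hF : ∀ s τ, a < s → s < τ → F τ - F s = ∫ r in s..τ, f r)
    (hG : ∀ s τ, a < s → s < τ → G τ - G s = ∫ r in s..τ, g r)
    (hΦ : ∀ s τ, a < s → s < τ → Φ τ - Φ s = ∫ r in s..τ, H r)
    (hf : LocallyIntegrableOn f (Ioi a)) (hg : LocallyIntegrableOn g (Ioi a))
    (hH : LocallyIntegrableOn H (Ioi a))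
    (hfg : ∀ᵐ r ∂volume.restrict (Ioi a), |f r - g r| ≤ ε * H r) :
    ∀ᶠ τ in 𝓝 t, |F τ - F t - (G τ - G t)| ≤ ε * |Φ τ - Φ t| := by
  filter_upwards [Ioi_mem_nhds ht] with τ hτ
  rw [sub_eq_integral_of_forall_lt hF ht hτ, sub_eq_integral_of_forall_lt hG ht hτ,
    sub_eq_integral_of_forall_lt hΦ ht hτ, ← intervalIntegral.integral_sub
      (hf.intervalIntegrable_of_Ioi ht hτ) (hg.intervalIntegrable_of_Ioi ht hτ)]
  have hbound : ∀ᵐ r ∂volume.restrict (Ι t τ), ‖f r - g r‖ ≤ ε * H r :=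
    ae_restrict_of_ae_restrict_of_subset (fun _ hr => (lt_min ht hτ).trans hr.1) hfg
  calc |∫ r in t..τ, (f r - g r)| ≤ |∫ r in t..τ, ε * H r| :=
        intervalIntegral.norm_integral_le_abs_of_norm_le hbound
          ((hH.intervalIntegrable_of_Ioi ht hτ).const_mul _)
    _ = ε * |∫ r in t..τ, H r| := by
        rw [intervalIntegral.integral_const_mul, abs_mul, abs_of_nonneg hε]

theorem hasDerivAt_of_forall_approx {F Φ : ℝ → ℝ} {f' Φ' t : ℝ} (hΦ : HasDerivAt Φ Φ' t)
    (happrox : ∀ ε > 0, ∃ G : ℝ → ℝ, ∃ g', HasDerivAt G g' t ∧ |f' - g'| ≤ ε * Φ' ∧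
      ∀ᶠ τ in 𝓝 t, |F τ - F t - (G τ - G t)| ≤ ε * |Φ τ - Φ t|) :
    HasDerivAt F f' t := by
  obtain ⟨L, hL⟩ := hΦ.isBigO_sub.bound
  rw [hasDerivAt_iff_isLittleO, Asymptotics.isLittleO_iff]
  intro c hc
  obtain ⟨ε, hε, hεL⟩ : ∃ ε > 0, ε * (|L| + |Φ'| + 1) = c / 3 :=
    ⟨c / 3 / (|L| + |Φ'| + 1), by positivity, div_mul_cancel₀ _ (by positivity)⟩
  obtain ⟨G, g', hG, hfg, hFG⟩ := happrox ε hε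
  filter_upwards [hL, hFG, Asymptotics.isLittleO_iff.1 (hasDerivAt_iff_isLittleO.1 hG)
    (by positivity : 0 < c / 3)] with τ hΦτ hFGτ hGτ
  simp only [Real.norm_eq_abs, smul_eq_mul] at hΦτ hGτ ⊢
  have hFGτ' : ε * |Φ τ - Φ t| ≤ c / 3 * |τ - t| :=
    calc ε * |Φ τ - Φ t| ≤ ε * ((|L| + |Φ'| + 1) * |τ - t|) := by
          gcongr
          exact hΦτ.trans (by gcongr; linarith [le_abs_self L, abs_nonneg Φ'])
      _ = c / 3 * |τ - t| := by rw [← hεL]; ring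
  have hfgτ : |τ - t| * |f' - g'| ≤ c / 3 * |τ - t| :=
    calc |τ - t| * |f' - g'| ≤ |τ - t| * (ε * (|L| + |Φ'| + 1)) := by
          gcongr
          exact hfg.trans (by gcongr; linarith [le_abs_self Φ', abs_nonneg L])
      _ = c / 3 * |τ - t| := by rw [hεL]; ring
  calc |F τ - F t - (τ - t) * f'|
      = |(F τ - F t - (G τ - G t)) + (G τ - G t - (τ - t) * g') + (τ - t) * (g' - f')| := by
        ring_nf
    _ ≤ |F τ - F t - (G τ - G t)| + |G τ - G t - (τ - t) * g'| + |τ - t| * |f' - g'| := by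
        rw [abs_sub_comm f' g', ← abs_mul]
        exact abs_add_three _ _ _
    _ ≤ c * |τ - t| := by linarith

section Slices

variable {Y G : Type*} [MeasureSpace Y] [SigmaFinite (volume : Measure Y)]
  [TopologicalSpace Y] [NormedAddCommGroup G] {f : ℝ × Y → G} {a : ℝ} {K : Set Y}

theorem MeasureTheory.LocallyIntegrableOn.integrable_prod_restrict
    (hf : LocallyIntegrableOn f (Ioi a ×ˢ univ)) {I : Set ℝ} (hI : IsCompact I)
    (hIa : I ⊆ Ioi a) (hK : IsCompact K) :
    Integrable f ((volume.restrict I).prod (volume.restrict K)) := by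
  rw [Measure.prod_restrict, ← Measure.volume_eq_prod]
  exact hf.integrableOn_compact_subset (prod_mono hIa (subset_univ K)) (hI.prod hK)

theorem MeasureTheory.LocallyIntegrableOn.ae_integrableOn_slice
    (hf : LocallyIntegrableOn f (Ioi a ×ˢ univ)) (hK : IsCompact K) :
    ∀ᵐ r ∂volume.restrict (Ioi a), IntegrableOn (fun y => f (r, y)) K :=
  ae_restrict_Ioi_of_forall_Icc fun _ _ hb _ =>
    (hf.integrable_prod_restrict isCompact_Icc (fun _ hx => hb.trans_le hx.1) hK).prod_right_ae

theorem MeasureTheory.LocallyIntegrableOn.integral_slice [NormedSpace ℝ G]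
    (hf : LocallyIntegrableOn f (Ioi a ×ˢ univ)) (hK : IsCompact K) :
    LocallyIntegrableOn (fun r => ∫ y in K, f (r, y)) (Ioi a) :=
  (locallyIntegrableOn_iff isOpen_Ioi.isLocallyClosed).2 fun _ hIa hI =>
    (hf.integrable_prod_restrict hI hIa hK).integral_prod_left

end Slices

theorem exists_seq_forall_dist_lt {α β : Type*} [Nonempty α] [PseudoMetricSpace β]
    [SecondCountableTopology β] (J : α → β) :
    ∃ u : ℕ → α, ∀ a, ∀ ε > 0, ∃ n, dist (J a) (J (u n)) < ε := by
  let := PseudoMetricSpace.induced J ‹_›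
  have : SecondCountableTopology α := Topology.IsInducing.secondCountableTopology ⟨rfl⟩
  obtain ⟨u, hu⟩ := TopologicalSpace.exists_dense_seq α
  exact ⟨u, fun a ε hε => hu.exists_dist_lt a hε⟩

theorem abs_mul_fst_add_snd_apply_le {F : Type*} [NormedAddCommGroup F] [NormedSpace ℝ F]
    (j : ℝ × (F →L[ℝ] ℝ)) (a : ℝ) (b : F) : |a * j.1 + j.2 b| ≤ ‖j‖ * (|a| + ‖b‖) :=
  calc |a * j.1 + j.2 b| ≤ |a| * |j.1| + ‖j.2‖ * ‖b‖ := by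
        rw [← abs_mul]
        exact (abs_add_le _ _).trans (add_le_add le_rfl (j.2.le_opNorm b))
    _ ≤ |a| * ‖j‖ + ‖j‖ * ‖b‖ := by
        gcongr
        exacts [norm_fst_le j, norm_snd_le j]
    _ = ‖j‖ * (|a| + ‖b‖) := by ring

section Jet

variable {d : ℕ}

/-- All that the Fokker–Planck–Kolmogorov integrand sees of a test function. -/
noncomputable def jet (ζ : ℝ^d → ℝ) (x : ℝ^d) : ℝ × (ℝ^d →L[ℝ] ℝ) := (lapl ζ x, fderiv ℝ ζ x)

variable {ζ : ℝ^d → ℝ}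

theorem jet_eq_zero_of_notMem_tsupport {x : ℝ^d} (hx : x ∉ tsupport ζ) : jet ζ x = 0 := by
  refine Prod.ext (Finset.sum_eq_zero fun i _ => ?_ : lapl ζ x = 0)
    (fderiv_of_notMem_tsupport ℝ hx)
  rw [fderiv_of_notMem_tsupport ℝ fun h => hx (tsupport_fderiv_apply_subset ℝ _ h)]
  rfl

theorem continuous_jet (hζ : ContDiff ℝ 2 ζ) : Continuous (jet ζ) := by
  have hDζ : ContDiff ℝ 1 (fderiv ℝ ζ) := hζ.fderiv_right (by norm_num)
  refine Continuous.prodMk (continuous_finsetSum _ fun i _ => ?_) hDζ.continuous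
  exact ((ContinuousLinearMap.apply ℝ ℝ _).contDiff.comp hDζ).continuous_fderiv one_ne_zero
    |>.clm_apply continuous_const

theorem HasCompactSupport.jet (hζ : HasCompactSupport ζ) : HasCompactSupport (jet ζ) :=
  hζ.mono' fun _ hx => not_not.1 fun h => hx (jet_eq_zero_of_notMem_tsupport h)

theorem exists_seq_dense_jet {K : Set (ℝ^d)} (hK : IsCompact K) :
    ∃ η : ℕ → ℝ^d → ℝ, (∀ n, ContDiff ℝ 2 (η n) ∧ tsupport (η n) ⊆ K) ∧
      ∀ ζ : ℝ^d → ℝ, ContDiff ℝ 2 ζ → tsupport ζ ⊆ K →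
        ∀ ε > 0, ∃ n, ∀ x, ‖jet ζ x - jet (η n) x‖ ≤ ε := by
  have : CompactSpace K := isCompact_iff_compactSpace.mp hK
  let S := {ζ : ℝ^d → ℝ // ContDiff ℝ 2 ζ ∧ tsupport ζ ⊆ K}
  have : Nonempty S := ⟨⟨0, contDiff_const, by simp⟩⟩
  let J : S → C(K, ℝ × (ℝ^d →L[ℝ] ℝ)) := fun ζ =>
    ⟨fun x => jet ζ.1 x, (continuous_jet ζ.2.1).comp continuous_subtype_val⟩
  obtain ⟨u, hu⟩ := exists_seq_forall_dist_lt J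
  refine ⟨fun n => (u n).1, fun n => (u n).2, fun ζ hζ hζK ε hε => ?_⟩
  obtain ⟨n, hn⟩ := hu ⟨ζ, hζ, hζK⟩ ε hε
  refine ⟨n, fun x => ?_⟩
  by_cases hx : x ∈ K
  · rw [← dist_eq_norm]
    exact (ContinuousMap.dist_apply_le_dist (f := J ⟨ζ, hζ, hζK⟩) (g := J (u n)) ⟨x, hx⟩).trans
      hn.le
  · rw [jet_eq_zero_of_notMem_tsupport (fun h => hx (hζK h)),
      jet_eq_zero_of_notMem_tsupport (fun h => hx ((u n).2.2 h)), sub_zero, norm_zero]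
    exact hε.le

end Jet

section FokkerPlanck

variable {d : ℕ} {A : ℝ → ℝ^d → ℝ} {B : ℝ → ℝ^d → ℝ^d} {ζ η : ℝ^d → ℝ}

noncomputable def fpkIntegrand (A : ℝ → ℝ^d → ℝ) (B : ℝ → ℝ^d → ℝ^d) (ζ : ℝ^d → ℝ) (r : ℝ)
    (x : ℝ^d) : ℝ :=
  A r x * lapl ζ x + fderiv ℝ ζ x (B r x)

theorem abs_fpkIntegrand_le (r : ℝ) (x : ℝ^d) :
    |fpkIntegrand A B ζ r x| ≤ ‖jet ζ x‖ * (|A r x| + ‖B r x‖) :=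
  abs_mul_fst_add_snd_apply_le (jet ζ x) _ _

theorem abs_fpkIntegrand_sub_le (r : ℝ) (x : ℝ^d) :
    |fpkIntegrand A B ζ r x - fpkIntegrand A B η r x| ≤
      ‖jet ζ x - jet η x‖ * (|A r x| + ‖B r x‖) := by
  convert abs_mul_fst_add_snd_apply_le (jet ζ x - jet η x) (A r x) (B r x) using 2
  simp only [fpkIntegrand, jet, Prod.fst_sub, Prod.snd_sub, FunLike.coe_sub, Pi.sub_apply]
  ring

theorem fpkIntegrand_eq_zero_of_notMem_tsupport (r : ℝ) {x : ℝ^d} (hx : x ∉ tsupport ζ) :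
    fpkIntegrand A B ζ r x = 0 := by
  have := jet_eq_zero_of_notMem_tsupport hx
  simp only [jet, Prod.mk_eq_zero] at this
  simp [fpkIntegrand, this.1, this.2]

theorem measurable_fpkIntegrand (hA : Measurable (Function.uncurry A))
    (hB : Measurable (Function.uncurry B)) (hζ : ContDiff ℝ 2 ζ) :
    Measurable (Function.uncurry (fpkIntegrand A B ζ)) := by
  have hjet : Measurable fun p : ℝ × ℝ^d => jet ζ p.2 :=
    (continuous_jet hζ).measurable.comp measurable_snd
  exact (hA.mul hjet.fst).add
    (isBoundedBilinearMap_apply.continuous.measurable.comp (hjet.snd.prodMk hB))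

theorem locallyIntegrableOn_fpkIntegrand (hA : Measurable (Function.uncurry A))
    (hB : Measurable (Function.uncurry B)) {s : Set (ℝ × ℝ^d)}
    (hW : LocallyIntegrableOn (fun p : ℝ × ℝ^d => |A p.1 p.2| + ‖B p.1 p.2‖) s)
    (hζ : ContDiff ℝ 2 ζ) (hζc : HasCompactSupport ζ) :
    LocallyIntegrableOn (Function.uncurry (fpkIntegrand A B ζ)) s := by
  obtain ⟨C, hC⟩ := (continuous_jet hζ).bounded_above_of_compact_support hζc.jet
  refine (hW.smul C).mono (measurable_fpkIntegrand hA hB hζ).aestronglyMeasurable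
    (ae_of_all _ fun p => ?_)
  calc ‖fpkIntegrand A B ζ p.1 p.2‖ ≤ C * (|A p.1 p.2| + ‖B p.1 p.2‖) :=
        (abs_fpkIntegrand_le _ _).trans (by gcongr; exact hC _)
    _ ≤ ‖C * (|A p.1 p.2| + ‖B p.1 p.2‖)‖ := le_abs_self _

theorem integral_fpkIntegrand_eq_setIntegral {K : Set (ℝ^d)} (hζK : tsupport ζ ⊆ K) (r : ℝ) :
    ∫ x, fpkIntegrand A B ζ r x = ∫ x in K, fpkIntegrand A B ζ r x :=
  (setIntegral_eq_integral_of_forall_compl_eq_zero fun _ hx =>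
    fpkIntegrand_eq_zero_of_notMem_tsupport r fun h => hx (hζK h)).symm

theorem locallyIntegrableOn_integral_fpkIntegrand (hA : Measurable (Function.uncurry A))
    (hB : Measurable (Function.uncurry B)) {a : ℝ}
    (hW : LocallyIntegrableOn (fun p : ℝ × ℝ^d => |A p.1 p.2| + ‖B p.1 p.2‖) (Ioi a ×ˢ univ))
    (hζ : ContDiff ℝ 2 ζ) {K : Set (ℝ^d)} (hK : IsCompact K) (hζK : tsupport ζ ⊆ K) :
    LocallyIntegrableOn (fun r => ∫ x, fpkIntegrand A B ζ r x) (Ioi a) := by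
  simp_rw [integral_fpkIntegrand_eq_setIntegral hζK]
  exact (locallyIntegrableOn_fpkIntegrand hA hB hW hζ
    (hK.of_isClosed_subset (isClosed_tsupport ζ) hζK)).integral_slice hK

theorem integrableOn_fpkIntegrand (hA : Measurable (Function.uncurry A))
    (hB : Measurable (Function.uncurry B)) {K : Set (ℝ^d)} {r : ℝ}
    (hr : IntegrableOn (fun x => |A r x| + ‖B r x‖) K) (hζ : ContDiff ℝ 2 ζ)
    (hζc : HasCompactSupport ζ) : IntegrableOn (fpkIntegrand A B ζ r) K := by
  obtain ⟨C, hC⟩ := (continuous_jet hζ).bounded_above_of_compact_support hζc.jet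
  exact (hr.const_mul C).mono'
    ((measurable_fpkIntegrand hA hB hζ).comp measurable_prodMk_left).aestronglyMeasurable
    (ae_of_all _ fun x => (abs_fpkIntegrand_le _ _).trans (by gcongr; exact hC _))

theorem abs_integral_fpkIntegrand_sub_le (hA : Measurable (Function.uncurry A))
    (hB : Measurable (Function.uncurry B)) {K : Set (ℝ^d)} (hK : IsCompact K) {r ε : ℝ}
    (hr : IntegrableOn (fun x => |A r x| + ‖B r x‖) K)
    (hζ : ContDiff ℝ 2 ζ) (hζK : tsupport ζ ⊆ K) (hη : ContDiff ℝ 2 η) (hηK : tsupport η ⊆ K)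
    (hε : ∀ x, ‖jet ζ x - jet η x‖ ≤ ε) :
    |(∫ x, fpkIntegrand A B ζ r x) - ∫ x, fpkIntegrand A B η r x| ≤
      ε * ∫ x in K, (|A r x| + ‖B r x‖) := by
  rw [integral_fpkIntegrand_eq_setIntegral hζK, integral_fpkIntegrand_eq_setIntegral hηK,
    ← integral_sub
      (integrableOn_fpkIntegrand hA hB hr hζ (hK.of_isClosed_subset (isClosed_tsupport ζ) hζK))
      (integrableOn_fpkIntegrand hA hB hr hη (hK.of_isClosed_subset (isClosed_tsupport η) hηK)),
    ← integral_const_mul, ← Real.norm_eq_abs]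
  refine norm_integral_le_of_norm_le (hr.const_mul ε) (ae_of_all _ fun x => ?_)
  exact (abs_fpkIntegrand_sub_le r x).trans (by gcongr; exact hε x)

/-- The countably many instances of Lebesgue's differentiation theorem used at time `t`. -/
def IsRegularTime (μ : ℝ → Measure (ℝ^d)) (A : ℝ → ℝ^d → ℝ) (B : ℝ → ℝ^d → ℝ^d)
    (K : Set (ℝ^d)) (η : ℕ → ℝ^d → ℝ) (t : ℝ) : Prop :=
  IntegrableOn (fun x => |A t x| + ‖B t x‖) K ∧
    HasDerivAt (fun τ => ∫ r in 1..τ, ∫ x in K, (|A r x| + ‖B r x‖))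
      (∫ x in K, (|A t x| + ‖B t x‖)) t ∧
    ∀ n, HasDerivAt (fun τ => ∫ x, η n x ∂(μ τ)) (∫ x, fpkIntegrand A B (η n) t x) t

variable {μ : ℝ → Measure (ℝ^d)} {K : Set (ℝ^d)} {η : ℕ → ℝ^d → ℝ}

theorem ae_isRegularTime (hA : Measurable (Function.uncurry A))
    (hB : Measurable (Function.uncurry B))
    (hW : LocallyIntegrableOn (fun p : ℝ × ℝ^d => |A p.1 p.2| + ‖B p.1 p.2‖) (Ioi 0 ×ˢ univ))
    (hFPK : ∀ s t : ℝ, 0 < s → s < t → ∀ ζ : ℝ^d → ℝ, ContDiff ℝ 2 ζ → HasCompactSupport ζ →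
      (∫ x, ζ x ∂(μ t)) - (∫ x, ζ x ∂(μ s)) = ∫ r in s..t, ∫ x, fpkIntegrand A B ζ r x)
    (hK : IsCompact K) (hη : ∀ n, ContDiff ℝ 2 (η n) ∧ tsupport (η n) ⊆ K) :
    ∀ᵐ t ∂volume.restrict (Ioi 0), IsRegularTime μ A B K η t := by
  have hH := hW.integral_slice hK
  refine (hW.ae_integrableOn_slice hK).and <|
    (ae_hasDerivAt_of_sub_eq_integral hH fun s τ hs hsτ =>
      hH.integral_sub_integral one_pos hs (hs.trans hsτ)).and <| ae_all_iff.2 fun n => ?_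
  exact ae_hasDerivAt_of_sub_eq_integral
    (locallyIntegrableOn_integral_fpkIntegrand hA hB hW (hη n).1 hK (hη n).2)
    fun s τ hs hsτ => hFPK s τ hs hsτ _ (hη n).1
      (hK.of_isClosed_subset (isClosed_tsupport _) (hη n).2)

theorem IsRegularTime.hasDerivAt (hA : Measurable (Function.uncurry A))
    (hB : Measurable (Function.uncurry B))
    (hW : LocallyIntegrableOn (fun p : ℝ × ℝ^d => |A p.1 p.2| + ‖B p.1 p.2‖) (Ioi 0 ×ˢ univ))
    (hFPK : ∀ s t : ℝ, 0 < s → s < t → ∀ ζ : ℝ^d → ℝ, ContDiff ℝ 2 ζ → HasCompactSupport ζ →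
      (∫ x, ζ x ∂(μ t)) - (∫ x, ζ x ∂(μ s)) = ∫ r in s..t, ∫ x, fpkIntegrand A B ζ r x)
    (hK : IsCompact K) (hη : ∀ n, ContDiff ℝ 2 (η n) ∧ tsupport (η n) ⊆ K)
    (hη_dense : ∀ ζ : ℝ^d → ℝ, ContDiff ℝ 2 ζ → tsupport ζ ⊆ K →
      ∀ ε > 0, ∃ n, ∀ x, ‖jet ζ x - jet (η n) x‖ ≤ ε)
    {t : ℝ} (ht : 0 < t) (hreg : IsRegularTime μ A B K η t) (hζ : ContDiff ℝ 2 ζ)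
    (hζK : tsupport ζ ⊆ K) :
    HasDerivAt (fun τ => ∫ x, ζ x ∂(μ τ)) (∫ x, fpkIntegrand A B ζ t x) t := by
  obtain ⟨hWt, hHt, hηt⟩ := hreg
  have hH : LocallyIntegrableOn (fun r => ∫ x in K, (|A r x| + ‖B r x‖)) (Ioi 0) :=
    hW.integral_slice hK
  have hc (ζ : ℝ^d → ℝ) (hζK : tsupport ζ ⊆ K) : HasCompactSupport ζ :=
    hK.of_isClosed_subset (isClosed_tsupport ζ) hζK
  refine hasDerivAt_of_forall_approx hHt fun ε hε => ?_
  obtain ⟨n, hn⟩ := hη_dense ζ hζ hζK ε hε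
  have hrate (r : ℝ) (hr : IntegrableOn (fun x => |A r x| + ‖B r x‖) K) :
      |(∫ x, fpkIntegrand A B ζ r x) - ∫ x, fpkIntegrand A B (η n) r x| ≤
        ε * ∫ x in K, (|A r x| + ‖B r x‖) :=
    abs_integral_fpkIntegrand_sub_le hA hB hK hr hζ hζK (hη n).1 (hη n).2 hn
  refine ⟨_, _, hηt n, hrate t hWt, ?_⟩
  refine eventually_abs_sub_sub_le ht hε.le
    (fun s τ hs hsτ => hFPK s τ hs hsτ ζ hζ (hc ζ hζK))
    (fun s τ hs hsτ => hFPK s τ hs hsτ _ (hη n).1 (hc _ (hη n).2))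
    (fun s τ hs hsτ => hH.integral_sub_integral one_pos hs (hs.trans hsτ))
    (locallyIntegrableOn_integral_fpkIntegrand hA hB hW hζ hK hζK)
    (locallyIntegrableOn_integral_fpkIntegrand hA hB hW (hη n).1 hK (hη n).2) hH ?_
  filter_upwards [hW.ae_integrableOn_slice hK] with r hr using hrate r hr

end FokkerPlanck

theorem stmt_15_general (d : ℕ)
    (μ : ℝ → Measure (EuclideanSpace ℝ (Fin d)))
    (A : ℝ → EuclideanSpace ℝ (Fin d) → ℝ)
    (B : ℝ → EuclideanSpace ℝ (Fin d) → EuclideanSpace ℝ (Fin d))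
    (hA_meas : Measurable (Function.uncurry A))
    (hB_meas : Measurable (Function.uncurry B))
    (hA_loc : LocallyIntegrableOn (fun p : ℝ × EuclideanSpace ℝ (Fin d) => A p.1 p.2)
      (Ioi (0 : ℝ) ×ˢ univ) volume)
    (hB_loc : LocallyIntegrableOn (fun p : ℝ × EuclideanSpace ℝ (Fin d) => ‖B p.1 p.2‖)
      (Ioi (0 : ℝ) ×ˢ univ) volume)
    (hFPK : ∀ s t : ℝ, 0 < s → s < t →
      ∀ ζ : EuclideanSpace ℝ (Fin d) → ℝ, ContDiff ℝ 2 ζ → HasCompactSupport ζ →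
        (∫ x, ζ x ∂(μ t)) - (∫ x, ζ x ∂(μ s)) =
          ∫ r in s..t, ∫ x, (A r x * lapl ζ x + fderiv ℝ ζ x (B r x))) :
    ∃ N : Set ℝ, N ⊆ Ioi 0 ∧ volume N = 0 ∧
      ∀ t : ℝ, 0 < t → t ∉ N →
        ∀ ζ : EuclideanSpace ℝ (Fin d) → ℝ, ContDiff ℝ 2 ζ → HasCompactSupport ζ →
          HasDerivAt (fun τ : ℝ => ∫ x, ζ x ∂(μ τ))
            (∫ x, (A t x * lapl ζ x + fderiv ℝ ζ x (B t x))) t := by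
  have hW : LocallyIntegrableOn (fun p : ℝ × ℝ^d => |A p.1 p.2| + ‖B p.1 p.2‖)
      (Ioi 0 ×ˢ univ) := hA_loc.norm.add hB_loc
  have hK (k : ℕ) : IsCompact (closedBall (0 : ℝ^d) k) := isCompact_closedBall 0 k
  choose η hη hη_dense using fun k => exists_seq_dense_jet (hK k)
  have hgood : ∀ᵐ t ∂volume.restrict (Ioi 0), ∀ k : ℕ,
      IsRegularTime μ A B (closedBall 0 k) (η k) t :=
    ae_all_iff.2 fun k => ae_isRegularTime hA_meas hB_meas hW hFPK (hK k) (hη k)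
  refine ⟨_, ?_, ae_iff.1 ((ae_restrict_iff' measurableSet_Ioi).1 hgood), ?_⟩
  · exact fun t ht => (Classical.not_imp.1 ht).1
  intro t ht htN ζ hζ hζc
  obtain ⟨R, hR⟩ := hζc.isBounded.subset_closedBall 0
  have hζK : tsupport ζ ⊆ closedBall 0 ⌈R⌉₊ :=
    hR.trans (closedBall_subset_closedBall (Nat.le_ceil R))
  exact (not_not.1 htN ht _).hasDerivAt hA_meas hB_meas hW hFPK (hK _) (hη _) (hη_dense _) ht hζ
    hζK

/-- Let `(μ_t)_{t>0}` be Borel probability measures on `ℝ^d`, Borel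
measurable in `t`. Let `A : (0,∞)×ℝ^d → ℝ` and `B : (0,∞)×ℝ^d → ℝ^d` be Borel and locally
Lebesgue integrable on `(0,∞)×ℝ^d`, and suppose the weak Fokker–Planck identity
`∫ζ dμ_t − ∫ζ dμ_s = ∫_s^t ∫ (A(r,x)·Δζ(x) + B(r,x)·∇ζ(x)) dx dr` holds for all
`0 < s < t` and `ζ ∈ C²_c(ℝ^d)`. Then there is a Lebesgue-null set `N ⊆ (0,∞)` such that
for all `t ∈ (0,∞)∖N` and `ζ ∈ C²_c(ℝ^d)`, `τ ↦ ∫ζ dμ_τ` is differentiable at `t` with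
derivative `∫ (A(t,x)·Δζ(x) + B(t,x)·∇ζ(x)) dx`. -/
theorem stmt_15 (d : ℕ)
    (μ : ℝ → Measure (EuclideanSpace ℝ (Fin d)))
    (hprob : ∀ t : ℝ, 0 < t → IsProbabilityMeasure (μ t))
    (hμ_meas : ∀ A : Set (EuclideanSpace ℝ (Fin d)), MeasurableSet A →
      Measurable fun t => μ t A)
    (A : ℝ → EuclideanSpace ℝ (Fin d) → ℝ)
    (B : ℝ → EuclideanSpace ℝ (Fin d) → EuclideanSpace ℝ (Fin d))
    (hA_meas : Measurable (Function.uncurry A))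
    (hB_meas : Measurable (Function.uncurry B))
    (hA_loc : LocallyIntegrableOn (fun p : ℝ × EuclideanSpace ℝ (Fin d) => A p.1 p.2)
      (Ioi (0 : ℝ) ×ˢ univ) volume)
    (hB_loc : LocallyIntegrableOn (fun p : ℝ × EuclideanSpace ℝ (Fin d) => ‖B p.1 p.2‖)
      (Ioi (0 : ℝ) ×ˢ univ) volume)
    (hFPK : ∀ s t : ℝ, 0 < s → s < t →
      ∀ ζ : EuclideanSpace ℝ (Fin d) → ℝ, ContDiff ℝ 2 ζ → HasCompactSupport ζ →
        (∫ x, ζ x ∂(μ t)) - (∫ x, ζ x ∂(μ s)) =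
          ∫ r in s..t, ∫ x, (A r x * lapl ζ x + fderiv ℝ ζ x (B r x))) :
    ∃ N : Set ℝ, N ⊆ Ioi 0 ∧ volume N = 0 ∧
      ∀ t : ℝ, 0 < t → t ∉ N →
        ∀ ζ : EuclideanSpace ℝ (Fin d) → ℝ, ContDiff ℝ 2 ζ → HasCompactSupport ζ →
          HasDerivAt (fun τ : ℝ => ∫ x, ζ x ∂(μ τ))
            (∫ x, (A t x * lapl ζ x + fderiv ℝ ζ x (B t x))) t :=
  stmt_15_general d μ A B hA_meas hB_meas hA_loc hB_loc hFPK
end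

section
/- Let Φ ∈ L¹_loc(ℝ^d), let v: ℝ^d → [0,∞) be bounded and measurable with x ↦ Φ(x)v(x) Lebesgue-integrable, and let φ: ℝ^d → ℝ^d be continuously differentiable with compact support and Lipschitz constant L, and let τ ∈ ℝ with |τ|·L < 1. Then the function x ↦ Φ(x + τφ(x))·v(x) is Lebesgue-integrable on ℝ^d. -/
open MeasureTheory Real Set

/-! The map `T x = x + τ • φ x` is a `C¹` perturbation of the identity with
`‖τ • Dφ‖ ≤ |τ| L < 1`, so it is injective and its Jacobian determinant never vanishes.
On the compact set `tsupport φ` the change of variables formula turns `∫ |Φ ∘ T|` into an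
integral of `|Φ|` over the compact set `T '' tsupport φ`, up to the factor `|det DT|⁻¹`,
which is bounded there; so `Φ ∘ T` is integrable on `tsupport φ`, and `v` is bounded.
Off `tsupport φ` the map `T` is the identity and the integrand is `Φ v`. -/

open scoped NNReal

section

variable {E : Type*} [NormedAddCommGroup E] [NormedSpace ℝ E]

theorem injective_add_smul_of_lipschitzWith {φ : E → E} {K : ℝ≥0} (hφ : LipschitzWith K φ)
    {τ : ℝ} (hτ : ‖τ‖₊ * K < 1) : Function.Injective fun x => x + τ • φ x :=
  (AntilipschitzWith.id.add_lipschitzWith ((lipschitzWith_smul τ).comp hφ)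
    (by simpa using hτ)).injective

variable [FiniteDimensional ℝ E]

theorem ContinuousLinearMap.det_one_add_ne_zero_of_norm_lt_one {A : E →L[ℝ] E} (hA : ‖A‖ < 1) :
    (1 + A).det ≠ 0 := by
  have hunit : IsUnit (1 + A) := by
    simpa using isUnit_one_sub_of_norm_lt_one (x := -A) (by rwa [norm_neg])
  exact ((hunit.map ContinuousLinearMap.toLinearMapRingHom).map LinearMap.det).ne_zero

variable {F : Type*} [NormedAddCommGroup F] [NormedSpace ℝ F] [MeasurableSpace E] [BorelSpace E]
  {μ : Measure E} [μ.IsAddHaarMeasure]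

theorem MeasureTheory.LocallyIntegrable.integrableOn_comp_of_det_ne_zero {g : E → F}
    (hg : LocallyIntegrable g μ) {f : E → E} {f' : E → E →L[ℝ] E} {s : Set E}
    (hs : IsCompact s) (hf' : ∀ x ∈ s, HasFDerivWithinAt f (f' x) s x)
    (hf'c : ContinuousOn f' s) (hdet : ∀ x ∈ s, (f' x).det ≠ 0) (hf : InjOn f s) :
    IntegrableOn (g ∘ f) s μ := by
  have himage : IntegrableOn g (f '' s) μ :=
    hg.integrableOn_isCompact (hs.image_of_continuousOn fun x hx => (hf' x hx).continuousWithinAt)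
  have hjac := (integrableOn_image_iff_integrableOn_abs_det_fderiv_smul μ hs.measurableSet
    hf' hf g).1 himage
  have hinv : ContinuousOn (fun x => |(f' x).det|⁻¹) s :=
    (ContinuousLinearMap.continuous_det.comp_continuousOn hf'c).abs.inv₀
      fun x hx => abs_ne_zero.2 (hdet x hx)
  refine (hjac.continuousOn_smul hinv hs).congr_fun (fun x hx => ?_) hs.measurableSet
  simp [smul_smul, inv_mul_cancel₀ (abs_ne_zero.2 (hdet x hx))]

theorem MeasureTheory.LocallyIntegrable.integrableOn_comp_add_smul {Φ : E → F} (hΦ : LocallyIntegrable Φ μ)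
    {φ : E → E} (hφ : ContDiff ℝ 1 φ) {K : ℝ≥0} (hlip : LipschitzWith K φ) {τ : ℝ}
    (hτ : ‖τ‖₊ * K < 1) {s : Set E} (hs : IsCompact s) :
    IntegrableOn (fun x => Φ (x + τ • φ x)) s μ := by
  have hderiv : ∀ x, HasFDerivAt (fun x => x + τ • φ x) (1 + τ • fderiv ℝ φ x) x := fun x =>
    (hasFDerivAt_id x).add (((hφ.differentiable one_ne_zero) x).hasFDerivAt.const_smul τ)
  have hsmall : ∀ x, ‖τ • fderiv ℝ φ x‖ < 1 := fun x =>
    calc ‖τ • fderiv ℝ φ x‖ ≤ ‖τ‖ * K :=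
          (norm_smul τ _).trans_le (by gcongr; exact norm_fderiv_le_of_lipschitz ℝ hlip)
      _ < 1 := by exact_mod_cast hτ
  exact hΦ.integrableOn_comp_of_det_ne_zero hs (fun x _ => (hderiv x).hasFDerivWithinAt)
    (continuous_const.add ((hφ.continuous_fderiv one_ne_zero).const_smul τ)).continuousOn
    (fun x _ => ContinuousLinearMap.det_one_add_ne_zero_of_norm_lt_one (hsmall x))
    (injective_add_smul_of_lipschitzWith hlip hτ).injOn

end

theorem stmt_17_general (d : ℕ)
    (Φ : EuclideanSpace ℝ (Fin d) → ℝ)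
    (hΦ_loc : LocallyIntegrable Φ volume)
    (v : EuclideanSpace ℝ (Fin d) → ℝ)
    (hv_meas : Measurable v) (hv_nonneg : ∀ x, 0 ≤ v x)
    (hv_bdd : ∃ M : ℝ, ∀ x, v x ≤ M)
    (hΦv_int : Integrable (fun x => Φ x * v x) volume)
    (φ : EuclideanSpace ℝ (Fin d) → EuclideanSpace ℝ (Fin d))
    (hφ : ContDiff ℝ 1 φ) (hφc : HasCompactSupport φ)
    (L : ℝ) (hLip : ∀ x y, ‖φ x - φ y‖ ≤ L * ‖x - y‖)
    (τ : ℝ) (hτ : |τ| * L < 1) :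
    Integrable (fun x => Φ (x + τ • φ x) * v x) volume := by
  obtain ⟨M, hM⟩ := hv_bdd
  have hlip : LipschitzWith L.toNNReal φ := .of_dist_le' fun x y => by
    simpa [dist_eq_norm] using hLip x y
  have hτ' : ‖τ‖₊ * L.toNNReal < 1 := by
    rw [← NNReal.coe_lt_coe]
    rcases le_total L 0 with hL | hL <;> simp [Real.toNNReal_of_nonpos, hL, hτ]
  set S := tsupport φ
  have hS : IntegrableOn (fun x => Φ (x + τ • φ x) * v x) S :=
    (hΦ_loc.integrableOn_comp_add_smul hφ hlip hτ' hφc).mul_bdd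
      hv_meas.aestronglyMeasurable.restrict
      (.of_forall fun x => by rw [norm_of_nonneg (hv_nonneg x)]; exact hM x)
  have hSc : IntegrableOn (fun x => Φ (x + τ • φ x) * v x) Sᶜ :=
    hΦv_int.integrableOn.congr_fun (fun x hx => by simp [image_eq_zero_of_notMem_tsupport hx])
      (isClosed_tsupport φ).measurableSet.compl
  simpa using hS.union hSc

/-- Let `Φ ∈ L¹_loc(ℝ^d)`, let `v : ℝ^d → [0,∞)` be bounded and
measurable with `Φ·v` Lebesgue integrable, and let `φ : ℝ^d → ℝ^d` be continuously
differentiable with compact support and Lipschitz constant `L`, and `τ ∈ ℝ` with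
`|τ|·L < 1`. Then `x ↦ Φ(x + τφ(x))·v(x)` is Lebesgue integrable on `ℝ^d`. -/
theorem stmt_17 (d : ℕ)
    (Φ : EuclideanSpace ℝ (Fin d) → ℝ)
    (hΦ_meas : Measurable Φ)
    (hΦ_loc : LocallyIntegrable Φ volume)
    (v : EuclideanSpace ℝ (Fin d) → ℝ)
    (hv_meas : Measurable v) (hv_nonneg : ∀ x, 0 ≤ v x)
    (hv_bdd : ∃ M : ℝ, ∀ x, v x ≤ M)
    (hΦv_int : Integrable (fun x => Φ x * v x) volume)
    (φ : EuclideanSpace ℝ (Fin d) → EuclideanSpace ℝ (Fin d))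
    (hφ : ContDiff ℝ 1 φ) (hφc : HasCompactSupport φ)
    (L : ℝ) (hLip : ∀ x y, ‖φ x - φ y‖ ≤ L * ‖x - y‖)
    (τ : ℝ) (hτ : |τ| * L < 1) :
    Integrable (fun x => Φ (x + τ • φ x) * v x) volume :=
  stmt_17_general d Φ hΦ_loc v hv_meas hv_nonneg hv_bdd hΦv_int φ hφ hφc L hLip τ hτ
end
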